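/- arXiv:2301.02220 — 2 statements merged into one kernel-verified Lean document; each statement's English description precedes it below -/
import Mathlib

section
/- Discounted-ratio Bellman-difference identity: for every policy π, every function Ṽ : S → ℝ and every (a,s) ∈ A × S, Σ_{a'∈A, s'∈S} p_∞(a',s') ω^π(a',s';a,s) (γ Σ_{s''∈S} p(s''|a',s') Ṽ(s'') − Ṽ(s')) = −(1−γ) Ṽ(s); in particular the left-hand side does not depend on a. -/
namespace VEPO

variable {S A : Type} [Fintype S] [Fintype A] [DecidableEq S] [DecidableEq A]

/-- A probability mass function on a finite type, represented as a real-valued function. -/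
def IsPMF {X : Type} [Fintype X] (f : X → ℝ) : Prop :=
  (∀ x, 0 ≤ f x) ∧ ∑ x : X, f x = 1

/-- A transition kernel: for each action-state pair `(a, s)`, a pmf `p a s` on next states. -/
def IsKernel (p : A → S → S → ℝ) : Prop := ∀ a s, IsPMF (p a s)

/-- A policy: for each state `s`, a pmf `π s` on actions. -/
def IsPolicy (π : S → A → ℝ) : Prop := ∀ s, IsPMF (π s)

/-- The `t`-step visitation probability `p_t^π(s' | a, s)`. -/
def visit (p : A → S → S → ℝ) (π : S → A → ℝ) : ℕ → A → S → S → ℝ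
  | 0, _, s, s' => if s' = s then 1 else 0
  | 1, a, s, s' => p a s s'
  | (t + 2), a, s, s' =>
      ∑ s'' : S, visit p π (t + 1) a s s'' * ∑ a'' : A, π s'' a'' * p a'' s'' s'

/-- The Q-function `Q^π(a, s)`. -/
noncomputable def Qfun (p : A → S → S → ℝ) (r : S → A → ℝ) (γ : ℝ)
    (π : S → A → ℝ) (a : A) (s : S) : ℝ :=
  r s a + ∑' t : ℕ, γ ^ (t + 1) *
    ∑ s' : S, visit p π (t + 1) a s s' * ∑ a' : A, π s' a' * r s' a'

/-- The value function `V^π(s)`. -/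
noncomputable def Vfun (p : A → S → S → ℝ) (r : S → A → ℝ) (γ : ℝ)
    (π : S → A → ℝ) (s : S) : ℝ :=
  ∑ a : A, π s a * Qfun p r γ π a s

/-- The advantage function `A^π(a, s)`. -/
noncomputable def Adv (p : A → S → S → ℝ) (r : S → A → ℝ) (γ : ℝ)
    (π : S → A → ℝ) (a : A) (s : S) : ℝ :=
  Qfun p r γ π a s - Vfun p r γ π s

/-- The conditional discounted visitation probability `d^π(s' | a, s)`. -/
noncomputable def dvisit (p : A → S → S → ℝ) (γ : ℝ) (π : S → A → ℝ)
    (s' : S) (a : A) (s : S) : ℝ :=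
  (1 - γ) * ∑' t : ℕ, γ ^ t * visit p π t a s s'

/-- The integrated discounted visitation probability `d^{π,ν}(s')`. -/
noncomputable def dnu (p : A → S → S → ℝ) (γ : ℝ) (ν : S → ℝ)
    (π : S → A → ℝ) (s' : S) : ℝ :=
  ∑ s : S, ∑ a : A, π s a * ν s * dvisit p γ π s' a s

/-- The integrated value `V(π) = Σ_s ν(s) V^π(s)`. -/
noncomputable def IntV (p : A → S → S → ℝ) (r : S → A → ℝ) (γ : ℝ) (ν : S → ℝ)
    (π : S → A → ℝ) : ℝ :=
  ∑ s : S, ν s * Vfun p r γ π s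

/-- The first-order term `η₁(π₁, π₂)`. -/
noncomputable def eta1 (p : A → S → S → ℝ) (r : S → A → ℝ) (γ : ℝ) (ν : S → ℝ)
    (π₁ π₂ : S → A → ℝ) : ℝ :=
  ∑ a : A, ∑ s : S, π₁ s a * Adv p r γ π₂ a s * dnu p γ ν π₂ s

/-- The higher-order remainder `η₂(π₁, π₂)`. -/
noncomputable def eta2 (p : A → S → S → ℝ) (r : S → A → ℝ) (γ : ℝ) (ν : S → ℝ)
    (π₁ π₂ : S → A → ℝ) : ℝ :=
  ∑ a : A, ∑ s : S, (π₁ s a - π₂ s a) * Adv p r γ π₂ a s *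
    (dnu p γ ν π₁ s - dnu p γ ν π₂ s)

/-- Total variation distance between two pmfs on a finite type. -/
noncomputable def DTV {X : Type} [Fintype X] (μ₁ μ₂ : X → ℝ) : ℝ :=
  (1 / 2) * ∑ x : X, |μ₁ x - μ₂ x|

/-- Kullback–Leibler divergence between two pmfs on a finite type, valued in `EReal`
(equal to `⊤` if `μ₁` is not absolutely continuous w.r.t. `μ₂`). -/
noncomputable def DKL {X : Type} [Fintype X] (μ₁ μ₂ : X → ℝ) : EReal :=
  ∑ x : X, (if μ₁ x = 0 then (0 : EReal)
    else if μ₂ x = 0 then (⊤ : EReal)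
    else ((μ₁ x * Real.log (μ₁ x / μ₂ x) : ℝ) : EReal))

/-- Conditional discounted stationary probability ratio `ω^π(a', s'; a, s)`. -/
noncomputable def ratio (p : A → S → S → ℝ) (γ : ℝ) (pinf : A → S → ℝ)
    (π : S → A → ℝ) (a' : A) (s' : S) (a : A) (s : S) : ℝ :=
  (1 - γ) * ((if a' = a ∧ s' = s then 1 else 0) +
    ∑' t : ℕ, γ ^ (t + 1) * (π s' a' * visit p π (t + 1) a s s')) / pinf a' s'

/-- Integrated discounted stationary probability ratio `ω^{π,ν}(a', s')`. -/
noncomputable def rationu (p : A → S → S → ℝ) (γ : ℝ) (pinf : A → S → ℝ) (ν : S → ℝ)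
    (π : S → A → ℝ) (a' : A) (s' : S) : ℝ :=
  ∑ a : A, ∑ s : S, π s a * ν s * ratio p γ pinf π a' s' a s

/-- Marginal state distribution `p̄_t^{π,ν}` at time `t` when `S₀ ~ ν` and actions follow `π`. -/
def marg (p : A → S → S → ℝ) (π : S → A → ℝ) (ν : S → ℝ) : ℕ → S → ℝ
  | 0, s' => ν s'
  | (t + 1), s' => ∑ s : S, marg p π ν t s * ∑ a : A, π s a * p a s s'

/-- Conditional discounted state–action visitation `q^π(a', s'; a, s)`. -/
noncomputable def qvisit (p : A → S → S → ℝ) (γ : ℝ) (π : S → A → ℝ)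
    (a' : A) (s' : S) (a : A) (s : S) : ℝ :=
  (1 - γ) * ((if a' = a ∧ s' = s then 1 else 0) +
    ∑' t : ℕ, γ ^ (t + 1) * (π s' a' * visit p π (t + 1) a s s'))

/-- The estimating function `ψ(o) = ψ₁ + ψ₂(o) + ψ₃(o)` evaluated at a data tuple
`o = (s, a, rr, s')`, for nuisance functions `Ṽ = Vt`, `Ã = At`, `ω̃ = ωt`
(with `ωt a' s' a s = ω̃(a',s'; a,s)`) and `d̃ = dt` (with `dt s* a s = d̃(s* | a, s)`). -/
noncomputable def psi (γ : ℝ) (ν : S → ℝ) (π πold : S → A → ℝ)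
    (Vt : S → ℝ) (At : A → S → ℝ) (ωt : A → S → A → S → ℝ) (dt : S → A → S → ℝ)
    (s : S) (a : A) (rr : ℝ) (s' : S) : ℝ :=
  let dtnu : S → ℝ := fun sstar => ∑ a0 : A, ∑ s0 : S, πold s0 a0 * ν s0 * dt sstar a0 s0
  let ωtnu : A → S → ℝ := fun a1 s1 => ∑ a0 : A, ∑ s0 : S, πold s0 a0 * ν s0 * ωt a1 s1 a0 s0
  (∑ sstar : S, dtnu sstar * ∑ astar : A, π sstar astar * At astar sstar)
  + (1 / (1 - γ)) * ∑ sstar : S, dtnu sstar * ∑ astar : A,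
      (π sstar astar - πold sstar astar) * ωt a s astar sstar *
        (rr + γ * Vt s' - Vt s - At a s)
  + (ωtnu a s / (1 - γ)) * ∑ astar : A,
      (γ * ∑ a' : A, πold s' a' * ∑ sstar : S, dt sstar a' s' * π sstar astar * At astar sstar
       - ∑ sstar : S, dt sstar a s * π sstar astar * At astar sstar
       + (1 - γ) * π s astar * At astar s)

/-- The expectation `E[ψ(O)]` of the estimating function, where `(A₀, S₀) ~ p_∞`,
`S₁ | (A₀, S₀) ~ p(· | A₀, S₀)` and `E[R₀ | A₀, S₀] = r(S₀, A₀)`;  since `ψ` is affine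
in its reward argument with a coefficient not depending on `s'`, this finite sum is
exactly the expectation of `ψ(O)`. -/
noncomputable def Epsi (p : A → S → S → ℝ) (r : S → A → ℝ) (γ : ℝ) (ν : S → ℝ)
    (pinf : A → S → ℝ) (π πold : S → A → ℝ)
    (Vt : S → ℝ) (At : A → S → ℝ) (ωt : A → S → A → S → ℝ) (dt : S → A → S → ℝ) : ℝ :=
  ∑ a : A, ∑ s : S, pinf a s * ∑ s' : S, p a s s' *
    psi γ ν π πold Vt At ωt dt s a (r s a) s'

end VEPO

/-!
Write `Bᵥ(a', s') = γ (P V)(a', s') - V(s')` for the Bellman difference and `Gₜ` for the mean of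
`V` under the `t`-step visitation law from `(a, s)`. Since `p_∞ ω^π` is the discounted
state–action visitation `q^π`, the left-hand side is `(1 - γ)` times
`Bᵥ(a, s) + ∑_{t ≥ 0} γ^{t+1} ∑_{a', s'} π(a'|s') p_{t+1}(s'|a, s) Bᵥ(a', s')`.
Averaging `Bᵥ` against `π(a'|s') p_{t+1}(s'|a, s)` gives `γ G_{t+2} - G_{t+1}`, so the series
telescopes to `-γ G₁`, while `Bᵥ(a, s) = γ G₁ - V(s)`.
-/

theorem Summable.hasSum_succ_sub {G : Type*} [AddCommGroup G] [TopologicalSpace G]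
    [IsTopologicalAddGroup G] {f : ℕ → G} (hf : Summable f) :
    HasSum (fun n => f (n + 1) - f n) (-f 0) := by
  have hshift : HasSum (fun n => f (n + 1)) (∑' n, f n - f 0) := by
    simpa using (hasSum_nat_add_iff' 1).mpr hf.hasSum
  simpa using hshift.sub hf.hasSum

theorem summable_pow_mul_of_abs_le {γ C : ℝ} {f : ℕ → ℝ} (hγ0 : 0 ≤ γ) (hγ1 : γ < 1)
    (hf : ∀ n, |f n| ≤ C) : Summable fun n => γ ^ n * f n := by
  refine .of_norm_bounded ((summable_geometric_of_lt_one hγ0 hγ1).mul_right C) fun n => ?_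
  rw [Real.norm_eq_abs, abs_mul, abs_pow, abs_of_nonneg hγ0]
  exact mul_le_mul_of_nonneg_left (hf n) (pow_nonneg hγ0 n)

namespace VEPO

theorem IsPMF.le_one {X : Type} [Fintype X] {f : X → ℝ} (hf : IsPMF f) (x : X) : f x ≤ 1 :=
  hf.2 ▸ Finset.single_le_sum (fun y _ => hf.1 y) (Finset.mem_univ x)

variable {S A : Type} [Fintype S] [Fintype A] [DecidableEq S]
  {p : A → S → S → ℝ} {π : S → A → ℝ}

theorem isPMF_visit (hp : IsKernel p) (hπ : IsPolicy π) :
    ∀ (t : ℕ) (a : A) (s : S), IsPMF (visit p π t a s)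
  | 0, _, s => ⟨fun s' => by simp only [visit]; split <;> norm_num, by simp [visit]⟩
  | 1, a, s => hp a s
  | t + 2, a, s => by
    obtain ⟨hnonneg, hsum⟩ := isPMF_visit hp hπ (t + 1) a s
    refine ⟨fun s' => Finset.sum_nonneg fun s'' _ => mul_nonneg (hnonneg s'')
      (Finset.sum_nonneg fun a'' _ => mul_nonneg ((hπ s'').1 a'') ((hp a'' s'').1 s')), ?_⟩
    simp only [visit]
    rw [Finset.sum_comm]
    simp_rw [← Finset.mul_sum, Finset.sum_comm (γ := S), ← Finset.mul_sum, (hp _ _).2,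
      mul_one, (hπ _).2, mul_one, hsum]

def visitMean (p : A → S → S → ℝ) (π : S → A → ℝ) (V : S → ℝ) (t : ℕ) (a : A) (s : S) : ℝ :=
  ∑ s', visit p π t a s s' * V s'

theorem abs_visitMean_le (hp : IsKernel p) (hπ : IsPolicy π) (V : S → ℝ) (t : ℕ) (a : A)
    (s : S) : |visitMean p π V t a s| ≤ ∑ s', |V s'| := by
  have hvisit := isPMF_visit hp hπ t a s
  refine (Finset.abs_sum_le_sum_abs _ _).trans (Finset.sum_le_sum fun s' _ => ?_)
  rw [abs_mul, abs_of_nonneg (hvisit.1 s')]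
  exact mul_le_of_le_one_left (abs_nonneg _) (hvisit.le_one s')

theorem visitMean_one (V : S → ℝ) (a : A) (s : S) :
    visitMean p π V 1 a s = ∑ s', p a s s' * V s' := rfl

theorem visitMean_add_two (V : S → ℝ) (t : ℕ) (a : A) (s : S) :
    visitMean p π V (t + 2) a s =
      ∑ s', visit p π (t + 1) a s s' * ∑ a', π s' a' * ∑ s'', p a' s' s'' * V s'' := by
  simp only [visitMean, visit, Finset.sum_mul, Finset.mul_sum]
  rw [Finset.sum_comm]
  refine Finset.sum_congr rfl fun s' _ => ?_
  rw [Finset.sum_comm]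
  exact Finset.sum_congr rfl fun a' _ => Finset.sum_congr rfl fun s'' _ => by ring

theorem sum_policy_mul_visit_mul_bellman (hπ : ∀ s, ∑ a, π s a = 1) (γ : ℝ) (V : S → ℝ)
    (t : ℕ) (a : A) (s : S) :
    ∑ a', ∑ s', π s' a' * visit p π (t + 1) a s s' *
        (γ * ∑ s'', p a' s' s'' * V s'' - V s') =
      γ * visitMean p π V (t + 2) a s - visitMean p π V (t + 1) a s := by
  have hrow : ∀ s', ∑ a', π s' a' * visit p π (t + 1) a s s' *
      (γ * ∑ s'', p a' s' s'' * V s'' - V s') =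
      γ * (visit p π (t + 1) a s s' * ∑ a', π s' a' * ∑ s'', p a' s' s'' * V s'') -
        visit p π (t + 1) a s s' * V s' := by
    intro s'
    calc _ = ∑ a', (γ * (visit p π (t + 1) a s s' * (π s' a' * ∑ s'', p a' s' s'' * V s'')) -
          π s' a' * (visit p π (t + 1) a s s' * V s')) :=
          Finset.sum_congr rfl fun a' _ => by ring
      _ = _ := by rw [Finset.sum_sub_distrib, ← Finset.mul_sum, ← Finset.mul_sum,
          ← Finset.sum_mul, hπ, one_mul]
  rw [Finset.sum_comm, Finset.sum_congr rfl fun s' _ => hrow s', Finset.sum_sub_distrib,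
    ← Finset.mul_sum, visitMean_add_two, visitMean]

theorem summable_discounted_visit (hp : IsKernel p) (hπ : IsPolicy π) {γ : ℝ} (hγ0 : 0 ≤ γ)
    (hγ1 : γ < 1) (a' : A) (s' : S) (a : A) (s : S) :
    Summable fun t : ℕ => γ ^ (t + 1) * (π s' a' * visit p π (t + 1) a s s') := by
  refine (summable_nat_add_iff 1).mpr (summable_pow_mul_of_abs_le hγ0 hγ1 (C := 1)
    (f := fun t => π s' a' * visit p π t a s s') fun t => ?_)
  have hvisit := isPMF_visit hp hπ t a s
  rw [abs_of_nonneg (mul_nonneg ((hπ s').1 a') (hvisit.1 s'))]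
  exact mul_le_one₀ ((hπ s').le_one a') (hvisit.1 s') (hvisit.le_one s')

theorem sum_tsum_visit_mul_bellman (hp : IsKernel p) (hπ : IsPolicy π) {γ : ℝ} (hγ0 : 0 ≤ γ)
    (hγ1 : γ < 1) (V : S → ℝ) (a : A) (s : S) :
    ∑ a', ∑ s', (∑' t : ℕ, γ ^ (t + 1) * (π s' a' * visit p π (t + 1) a s s')) *
        (γ * ∑ s'', p a' s' s'' * V s'' - V s') = -(γ * visitMean p π V 1 a s) := by
  set f : ℕ → ℝ := fun t => γ ^ (t + 1) * visitMean p π V (t + 1) a s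
  have hf : Summable f := (summable_nat_add_iff 1).mpr
    (summable_pow_mul_of_abs_le hγ0 hγ1 fun t => abs_visitMean_le hp hπ V t a s)
  have hstep : ∀ t, ∑ a', ∑ s', γ ^ (t + 1) * (π s' a' * visit p π (t + 1) a s s') *
      (γ * ∑ s'', p a' s' s'' * V s'' - V s') = f (t + 1) - f t := fun t =>
    calc _ = γ ^ (t + 1) * ∑ a', ∑ s', π s' a' * visit p π (t + 1) a s s' *
          (γ * ∑ s'', p a' s' s'' * V s'' - V s') := by
          simp only [Finset.mul_sum, mul_assoc]
      _ = f (t + 1) - f t := by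
          rw [sum_policy_mul_visit_mul_bellman (fun s => (hπ s).2)]
          simp only [f]
          ring
  have htelescope := hf.hasSum_succ_sub
  simp_rw [← hstep] at htelescope
  calc _ = -f 0 := (hasSum_sum fun a' _ => hasSum_sum fun s' _ =>
        (summable_discounted_visit hp hπ hγ0 hγ1 a' s' a s).hasSum.mul_right _).unique htelescope
    _ = _ := by simp only [f, zero_add, pow_one]

variable [DecidableEq A]

theorem mul_ratio_eq_qvisit {γ : ℝ} {pinf : A → S → ℝ} {a' : A} {s' : S}
    (hpinf : pinf a' s' ≠ 0) (a : A) (s : S) :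
    pinf a' s' * ratio p γ pinf π a' s' a s = qvisit p γ π a' s' a s :=
  mul_div_cancel₀ _ hpinf

theorem sum_qvisit_mul (γ : ℝ) (g : A → S → ℝ) (a : A) (s : S) :
    ∑ a', ∑ s', qvisit p γ π a' s' a s * g a' s' = (1 - γ) * (g a s +
      ∑ a', ∑ s', (∑' t : ℕ, γ ^ (t + 1) * (π s' a' * visit p π (t + 1) a s s')) * g a' s') := by
  simp only [qvisit, mul_assoc, ← Finset.mul_sum, add_mul, Finset.sum_add_distrib, ite_mul,
    one_mul, zero_mul, ite_and, Finset.sum_ite_irrel, Finset.sum_const_zero, Finset.sum_ite_eq',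
    Finset.mem_univ, if_true]

theorem sum_qvisit_mul_bellman (hp : IsKernel p) (hπ : IsPolicy π) {γ : ℝ} (hγ0 : 0 ≤ γ)
    (hγ1 : γ < 1) (V : S → ℝ) (a : A) (s : S) :
    ∑ a', ∑ s', qvisit p γ π a' s' a s * (γ * ∑ s'', p a' s' s'' * V s'' - V s') =
      -(1 - γ) * V s := by
  rw [sum_qvisit_mul, sum_tsum_visit_mul_bellman hp hπ hγ0 hγ1, visitMean_one]
  ring

theorem ratio_bellman_difference_identity_general {S A : Type} [Fintype S] [Fintype A] [DecidableEq S] [DecidableEq A]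
    (p : A → S → S → ℝ) (γ : ℝ) (pinf : A → S → ℝ)
    (hp : IsKernel p) (hγ0 : 0 ≤ γ) (hγ1 : γ < 1)
    (hpos : ∀ a s, 0 < pinf a s)
    (π : S → A → ℝ) (hπ : IsPolicy π) :
    ∀ (Vt : S → ℝ) (a : A) (s : S),
      (∑ a' : A, ∑ s' : S, pinf a' s' * ratio p γ pinf π a' s' a s *
        (γ * (∑ s'' : S, p a' s' s'' * Vt s'') - Vt s')) = -(1 - γ) * Vt s := by
  intro Vt a s
  simp only [mul_ratio_eq_qvisit (hpos _ _).ne']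
  exact sum_qvisit_mul_bellman hp hπ hγ0 hγ1 Vt a s

theorem ratio_bellman_difference_identity {S A : Type} [Fintype S] [Fintype A] [DecidableEq S] [DecidableEq A]
    [Nonempty S] [Nonempty A]
    (p : A → S → S → ℝ) (γ : ℝ) (pinf : A → S → ℝ)
    (hp : IsKernel p) (hγ0 : 0 ≤ γ) (hγ1 : γ < 1)
    (hpinf : IsPMF (fun as : A × S => pinf as.1 as.2)) (hpos : ∀ a s, 0 < pinf a s)
    (π : S → A → ℝ) (hπ : IsPolicy π) :
    ∀ (Vt : S → ℝ) (a : A) (s : S),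
      (∑ a' : A, ∑ s' : S, pinf a' s' * ratio p γ pinf π a' s' a s *
        (γ * (∑ s'' : S, p a' s' s'' * Vt s'') - Vt s')) = -(1 - γ) * Vt s :=
  ratio_bellman_difference_identity_general p γ pinf hp hγ0 hγ1 hpos π hπ

end VEPO
end

section
/- Exact regret identity: suppose π^opt is a policy with V^{π^opt}(s) ≥ V^π(s) for every policy π and every s ∈ S, and π^opt(a|s) = 0 whenever Q^{π^opt}(a,s) < max_{a'∈A} Q^{π^opt}(a',s). Then for every policy π: V(π^opt) − V(π) = (1/(1−γ)) Σ_{s∈S} d^{π,ν}(s) Σ_{a∈A} |π(a|s) − π^opt(a|s)| · |A^{π^opt}(a,s)|. -/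
namespace VEPO

variable {S A : Type} [Fintype S] [Fintype A] [DecidableEq S] [DecidableEq A]

section RegretAux

lemma pmf_dot_bound {X : Type} [Fintype X] {μ : X → ℝ} (hμ : IsPMF μ)
    {h : X → ℝ} {C : ℝ} (hh : ∀ x, |h x| ≤ C) :
    |∑ x : X, μ x * h x| ≤ C := by
  calc |∑ x : X, μ x * h x| ≤ ∑ x : X, |μ x * h x| := Finset.abs_sum_le_sum_abs _ _
    _ ≤ ∑ x : X, μ x * C := by
        refine Finset.sum_le_sum fun x _ => ?_
        rw [abs_mul, abs_of_nonneg (hμ.1 x)]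
        exact mul_le_mul_of_nonneg_left (hh x) (hμ.1 x)
    _ = C := by rw [← Finset.sum_mul, hμ.2, one_mul]

lemma summable_geom_bound {γ C : ℝ} (h0 : 0 ≤ γ) (h1 : γ < 1) {c : ℕ → ℝ}
    (hc : ∀ t, |c t| ≤ C) : Summable (fun t => γ ^ t * c t) := by
  refine Summable.of_abs (Summable.of_nonneg_of_le (fun t => abs_nonneg _) (fun t => ?_)
    ((summable_geometric_of_lt_one h0 h1).mul_right C))
  rw [abs_mul, abs_pow, abs_of_nonneg h0]
  exact mul_le_mul_of_nonneg_left (hc t) (pow_nonneg h0 t)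

variable {p : A → S → S → ℝ} {π : S → A → ℝ}

lemma visit_zero (a : A) (s s' : S) : visit p π 0 a s s' = if s' = s then 1 else 0 := rfl

lemma visit_one (a : A) (s s' : S) : visit p π 1 a s s' = p a s s' := rfl

lemma visit_two (t : ℕ) (a : A) (s s' : S) :
    visit p π (t + 2) a s s' =
      ∑ s'' : S, visit p π (t + 1) a s s'' * ∑ a'' : A, π s'' a'' * p a'' s'' s' := rfl

lemma visit_pmf (hp : IsKernel p) (hπ : IsPolicy π) (t : ℕ) (a : A) (s : S) :
    IsPMF (visit p π t a s) := by
  have key : ∀ t : ℕ, ∀ a : A, ∀ s : S, IsPMF (visit p π (t + 1) a s) := by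
    intro t
    induction t with
    | zero => exact fun a s => hp a s
    | succ t ih =>
      intro a s
      constructor
      · intro s'
        rw [visit_two]
        exact Finset.sum_nonneg fun s'' _ => mul_nonneg ((ih a s).1 s'')
          (Finset.sum_nonneg fun a'' _ => mul_nonneg ((hπ s'').1 a'') ((hp a'' s'').1 s'))
      · simp only [visit_two]
        rw [Finset.sum_comm]
        have hrow : ∀ s'' : S,
            ∑ s' : S, visit p π (t + 1) a s s'' * ∑ a'' : A, π s'' a'' * p a'' s'' s'
              = visit p π (t + 1) a s s'' := by
          intro s''
          rw [← Finset.mul_sum]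
          have h2 : ∑ s' : S, ∑ a'' : A, π s'' a'' * p a'' s'' s' = 1 := by
            rw [Finset.sum_comm]
            calc ∑ a'' : A, ∑ s' : S, π s'' a'' * p a'' s'' s'
                = ∑ a'' : A, π s'' a'' * ∑ s' : S, p a'' s'' s' :=
                  Finset.sum_congr rfl fun a'' _ => (Finset.mul_sum _ _ _).symm
              _ = ∑ a'' : A, π s'' a'' :=
                  Finset.sum_congr rfl fun a'' _ => by rw [(hp a'' s'').2, mul_one]
              _ = 1 := (hπ s'').2
          rw [h2, mul_one]
        rw [Finset.sum_congr rfl fun s'' _ => hrow s'']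
        exact (ih a s).2
  match t with
  | 0 =>
    constructor
    · intro s'; rw [visit_zero]; split <;> norm_num
    · simp [visit_zero]
  | (t + 1) => exact key t a s

lemma visit_nonneg (hp : IsKernel p) (hπ : IsPolicy π) (t : ℕ) (a : A) (s s' : S) :
    0 ≤ visit p π t a s s' := (visit_pmf hp hπ t a s).1 s'

lemma visit_dot_bound (hp : IsKernel p) (hπ : IsPolicy π) {g : S → ℝ} {C : ℝ}
    (hg : ∀ s, |g s| ≤ C) (t : ℕ) (a : A) (s : S) :
    |∑ s' : S, visit p π t a s s' * g s'| ≤ C :=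
  pmf_dot_bound (visit_pmf hp hπ t a s) hg

lemma visit_le_one (hp : IsKernel p) (hπ : IsPolicy π) (t : ℕ) (a : A) (s s' : S) :
    visit p π t a s s' ≤ 1 := by
  calc visit p π t a s s' ≤ ∑ s'' : S, visit p π t a s s'' :=
      Finset.single_le_sum (fun s'' _ => visit_nonneg hp hπ t a s s'') (Finset.mem_univ s')
    _ = 1 := (visit_pmf hp hπ t a s).2

lemma swap_helper (c : S → ℝ) (d : S → A → ℝ) (v : A → S → S → ℝ) (k : S → ℝ) :
    ∑ s2 : S, (∑ s1 : S, c s1 * ∑ a1 : A, d s1 a1 * v a1 s1 s2) * k s2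
      = ∑ s1 : S, c s1 * ∑ a1 : A, d s1 a1 * (∑ s2 : S, v a1 s1 s2 * k s2) := by
  simp only [Finset.sum_mul, Finset.mul_sum]
  rw [Finset.sum_comm]
  refine Finset.sum_congr rfl fun s1 _ => ?_
  rw [Finset.sum_comm]
  exact Finset.sum_congr rfl fun a1 _ => Finset.sum_congr rfl fun s2 _ => by ring

lemma visit_front (t : ℕ) : ∀ (a : A) (s s' : S),
    visit p π (t + 2) a s s' =
      ∑ s1 : S, p a s s1 * ∑ a1 : A, π s1 a1 * visit p π (t + 1) a1 s1 s' := by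
  induction t with
  | zero =>
    intro a s s'
    rfl
  | succ t ih =>
    intro a s s'
    rw [visit_two]
    simp only [ih]
    rw [swap_helper (fun s1 => p a s s1) (fun s1 a1 => π s1 a1)
      (fun a1 s1 s2 => visit p π (t + 1) a1 s1 s2) (fun s2 => ∑ a'' : A, π s2 a'' * p a'' s2 s')]
    exact Finset.sum_congr rfl fun s1 _ => by
      rw [Finset.mul_sum, Finset.mul_sum]
      exact Finset.sum_congr rfl fun a1 _ => by rw [← visit_two, ih]

lemma star_front (g : S → ℝ) (t : ℕ) (a : A) (s : S) :
    ∑ s2 : S, visit p π (t + 2) a s s2 * g s2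
      = ∑ s1 : S, p a s s1 * ∑ a1 : A, π s1 a1 * ∑ s2 : S, visit p π (t + 1) a1 s1 s2 * g s2 := by
  simp only [visit_front]
  exact swap_helper (fun s1 => p a s s1) (fun s1 a1 => π s1 a1)
    (fun a1 s1 s2 => visit p π (t + 1) a1 s1 s2) g

/-- The tail operator. -/
noncomputable def Tg (p : A → S → S → ℝ) (π : S → A → ℝ) (γ : ℝ) (g : S → ℝ)
    (a : A) (s : S) : ℝ :=
  ∑' t : ℕ, γ ^ (t + 1) * ∑ s' : S, visit p π (t + 1) a s s' * g s'

lemma summable_Tg (hp : IsKernel p) (hπ : IsPolicy π) {γ : ℝ} (h0 : 0 ≤ γ) (h1 : γ < 1)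
    {g : S → ℝ} {C : ℝ} (hg : ∀ s, |g s| ≤ C) (a : A) (s : S) :
    Summable (fun t : ℕ => γ ^ (t + 1) * ∑ s' : S, visit p π (t + 1) a s s' * g s') := by
  refine (summable_geom_bound h0 h1
    (c := fun t => γ * ∑ s' : S, visit p π (t + 1) a s s' * g s') (C := γ * C)
    fun t => ?_).congr fun t => by ring
  rw [abs_mul, abs_of_nonneg h0]
  exact mul_le_mul_of_nonneg_left (visit_dot_bound hp hπ hg (t + 1) a s) h0

lemma Tg_bound (hp : IsKernel p) (hπ : IsPolicy π) {γ : ℝ} (h0 : 0 ≤ γ) (h1 : γ < 1)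
    {g : S → ℝ} {C : ℝ} (hg : ∀ s, |g s| ≤ C) (a : A) (s : S) :
    |Tg p π γ g a s| ≤ (1 - γ)⁻¹ * (γ * C) := by
  have hs := summable_Tg hp hπ h0 h1 hg a s
  simp only [Tg]
  have hgeo : Summable (fun t : ℕ => γ ^ t * (γ * C)) :=
    (summable_geometric_of_lt_one h0 h1).mul_right _
  have hterm : ∀ t : ℕ, |γ ^ (t + 1) * ∑ s' : S, visit p π (t + 1) a s s' * g s'|
      ≤ γ ^ t * (γ * C) := by
    intro t
    rw [abs_mul, abs_pow, abs_of_nonneg h0]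
    calc γ ^ (t + 1) * |∑ s' : S, visit p π (t + 1) a s s' * g s'|
        ≤ γ ^ (t + 1) * C :=
          mul_le_mul_of_nonneg_left (visit_dot_bound hp hπ hg (t + 1) a s) (by positivity)
      _ = γ ^ t * (γ * C) := by ring
  have h4 : (∑' t : ℕ, γ ^ t * (γ * C)) = (1 - γ)⁻¹ * (γ * C) := by
    rw [tsum_mul_right, tsum_geometric_of_lt_one h0 h1]
  rw [abs_le]
  constructor
  · rw [← h4]
    calc -(∑' t : ℕ, γ ^ t * (γ * C)) = ∑' t : ℕ, -(γ ^ t * (γ * C)) := by rw [tsum_neg]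
      _ ≤ ∑' t : ℕ, γ ^ (t + 1) * ∑ s' : S, visit p π (t + 1) a s s' * g s' :=
          Summable.tsum_le_tsum (fun t => neg_le_of_abs_le (hterm t)) hgeo.neg hs
  · rw [← h4]
    exact Summable.tsum_le_tsum (fun t => le_of_abs_le (hterm t)) hs hgeo

lemma tsum_finsum_pull {f : S → A → ℕ → ℝ} (hf : ∀ s a, Summable (f s a)) (k : S → A → ℝ) :
    ∑' t : ℕ, ∑ s1 : S, ∑ a1 : A, k s1 a1 * f s1 a1 t
      = ∑ s1 : S, ∑ a1 : A, k s1 a1 * ∑' t : ℕ, f s1 a1 t := by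
  rw [Summable.tsum_finsetSum fun s1 _ => summable_sum fun a1 _ => (hf s1 a1).mul_left _]
  refine Finset.sum_congr rfl fun s1 _ => ?_
  rw [Summable.tsum_finsetSum fun a1 _ => (hf s1 a1).mul_left _]
  exact Finset.sum_congr rfl fun a1 _ => tsum_mul_left

lemma Tg_bellman (hp : IsKernel p) (hπ : IsPolicy π) {γ : ℝ} (h0 : 0 ≤ γ) (h1 : γ < 1)
    {g : S → ℝ} {C : ℝ} (hg : ∀ s, |g s| ≤ C) (a : A) (s : S) :
    Tg p π γ g a s
      = γ * ∑ s1 : S, p a s s1 * (g s1 + ∑ a1 : A, π s1 a1 * Tg p π γ g a1 s1) := by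
  have hsum : ∀ (a : A) (s : S),
      Summable (fun t : ℕ => γ ^ (t + 1) * ∑ s' : S, visit p π (t + 1) a s s' * g s') :=
    fun a s => summable_Tg hp hπ h0 h1 hg a s
  have key : ∀ t : ℕ,
      γ ^ (t + 1 + 1) * ∑ s' : S, visit p π (t + 1 + 1) a s s' * g s'
        = ∑ s1 : S, ∑ a1 : A, (p a s s1 * π s1 a1 * γ) *
            (γ ^ (t + 1) * ∑ s' : S, visit p π (t + 1) a1 s1 s' * g s') := by
    intro t
    rw [show (t + 1 + 1) = t + 2 from rfl, star_front g t a s]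
    rw [Finset.mul_sum]
    refine Finset.sum_congr rfl fun s1 _ => ?_
    rw [Finset.mul_sum, Finset.mul_sum]
    exact Finset.sum_congr rfl fun a1 _ => by ring
  simp only [Tg]
  rw [Summable.tsum_eq_zero_add (hsum a s)]
  rw [tsum_congr key]
  rw [tsum_finsum_pull (fun s1 a1 => hsum a1 s1) (fun s1 a1 => p a s s1 * π s1 a1 * γ)]
  have hfirst : γ ^ (0 + 1) * ∑ s' : S, visit p π (0 + 1) a s s' * g s'
      = ∑ s1 : S, γ * (p a s s1 * g s1) := by
    rw [Finset.mul_sum]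
    exact Finset.sum_congr rfl fun s1 _ => by simp [visit_one]
  rw [hfirst, Finset.mul_sum, ← Finset.sum_add_distrib]
  refine Finset.sum_congr rfl fun s1 _ => ?_
  rw [mul_add, mul_add, Finset.mul_sum, Finset.mul_sum]
  congr 1
  exact Finset.sum_congr rfl fun a1 _ => by ring

lemma Q_eq_Tg (r : S → A → ℝ) (γ : ℝ) (a : A) (s : S) :
    Qfun p r γ π a s = r s a + Tg p π γ (fun s' => ∑ a' : A, π s' a' * r s' a') a s := rfl

lemma polr_bound (hπ : IsPolicy π) {r : S → A → ℝ} {Rmax : ℝ}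
    (hr : ∀ s a, |r s a| ≤ Rmax) (s' : S) :
    |∑ a' : A, π s' a' * r s' a'| ≤ Rmax :=
  pmf_dot_bound (hπ s') (fun a' => hr s' a')

lemma Q_bellman (hp : IsKernel p) (hπ : IsPolicy π) {r : S → A → ℝ} {Rmax : ℝ}
    (hr : ∀ s a, |r s a| ≤ Rmax) {γ : ℝ} (h0 : 0 ≤ γ) (h1 : γ < 1) (a : A) (s : S) :
    Qfun p r γ π a s = r s a + γ * ∑ s1 : S, p a s s1 * Vfun p r γ π s1 := by
  rw [Q_eq_Tg, Tg_bellman hp hπ h0 h1 (polr_bound hπ hr) a s]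
  congr 1
  rw [Finset.mul_sum, Finset.mul_sum]
  refine Finset.sum_congr rfl fun s1 _ => ?_
  have hV : Vfun p r γ π s1 = (∑ a' : A, π s1 a' * r s1 a')
      + ∑ a1 : A, π s1 a1 * Tg p π γ (fun s' => ∑ a' : A, π s' a' * r s' a') a1 s1 := by
    rw [Vfun, ← Finset.sum_add_distrib]
    refine Finset.sum_congr rfl fun a1 _ => ?_
    rw [Q_eq_Tg, mul_add]
  rw [hV]

lemma Q_bound (hp : IsKernel p) (hπ : IsPolicy π) {r : S → A → ℝ} {Rmax : ℝ}
    (hr : ∀ s a, |r s a| ≤ Rmax) {γ : ℝ} (h0 : 0 ≤ γ) (h1 : γ < 1) (a : A) (s : S) :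
    |Qfun p r γ π a s| ≤ Rmax + (1 - γ)⁻¹ * (γ * Rmax) := by
  rw [Q_eq_Tg]
  exact (abs_add_le _ _).trans
    (add_le_add (hr s a) (Tg_bound hp hπ h0 h1 (polr_bound hπ hr) a s))

lemma V_bound (hp : IsKernel p) (hπ : IsPolicy π) {r : S → A → ℝ} {Rmax : ℝ}
    (hr : ∀ s a, |r s a| ≤ Rmax) {γ : ℝ} (h0 : 0 ≤ γ) (h1 : γ < 1) (s : S) :
    |Vfun p r γ π s| ≤ Rmax + (1 - γ)⁻¹ * (γ * Rmax) :=
  pmf_dot_bound (hπ s) (fun a => Q_bound hp hπ hr h0 h1 a s)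

lemma contraction_zero [Nonempty S] {γ : ℝ} (h0 : 0 ≤ γ) (h1 : γ < 1)
    (K : S → S → ℝ) (hK0 : ∀ s s', 0 ≤ K s s') (hK1 : ∀ s, ∑ s' : S, K s s' = 1)
    (x : S → ℝ) (hx : ∀ s, x s = γ * ∑ s' : S, K s s' * x s') : ∀ s, x s = 0 := by
  set C := Finset.univ.sup' Finset.univ_nonempty (fun s : S => |x s|) with hC
  have hle : ∀ s, |x s| ≤ C := fun s => by
    rw [hC]; exact Finset.le_sup' (fun s : S => |x s|) (Finset.mem_univ s)
  have hbound : ∀ s, |x s| ≤ γ * C := by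
    intro s
    rw [hx s, abs_mul, abs_of_nonneg h0]
    refine mul_le_mul_of_nonneg_left ?_ h0
    calc |∑ s' : S, K s s' * x s'| ≤ ∑ s' : S, |K s s' * x s'| := Finset.abs_sum_le_sum_abs _ _
      _ ≤ ∑ s' : S, K s s' * C := Finset.sum_le_sum fun s' _ => by
          rw [abs_mul, abs_of_nonneg (hK0 s s')]
          exact mul_le_mul_of_nonneg_left (hle s') (hK0 s s')
      _ = C := by rw [← Finset.sum_mul, hK1 s, one_mul]
  have hCle : C ≤ γ * C := by
    obtain ⟨s0, -, hs0⟩ := Finset.exists_mem_eq_sup' (Finset.univ_nonempty (α := S))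
      (fun s : S => |x s|)
    calc C = |x s0| := by rw [hC, hs0]
      _ ≤ γ * C := hbound s0
  have hC0 : 0 ≤ C := le_trans (abs_nonneg _) (hle (Classical.arbitrary S))
  have hC00 : C ≤ 0 := by nlinarith
  intro s
  exact abs_nonpos_iff.mp ((hle s).trans hC00)

lemma swap2 (s : S) (γ : ℝ) (W : S → ℝ) :
    ∑ a : A, π s a * (γ * ∑ s1 : S, p a s s1 * W s1)
      = γ * ∑ s1 : S, (∑ a : A, π s a * p a s s1) * W s1 := by
  calc ∑ a : A, π s a * (γ * ∑ s1 : S, p a s s1 * W s1)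
      = ∑ a : A, ∑ s1 : S, π s a * (γ * (p a s s1 * W s1)) := by
        simp only [Finset.mul_sum]
    _ = ∑ s1 : S, ∑ a : A, π s a * (γ * (p a s s1 * W s1)) := Finset.sum_comm
    _ = γ * ∑ s1 : S, (∑ a : A, π s a * p a s s1) * W s1 := by
        rw [Finset.mul_sum]
        refine Finset.sum_congr rfl fun s1 _ => ?_
        rw [Finset.sum_mul, Finset.mul_sum]
        exact Finset.sum_congr rfl fun a _ => by ring

lemma mix (hπ : IsPolicy π) (r : S → A → ℝ) (s : S) (γ : ℝ) (W : S → ℝ) :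
    ∑ a : A, π s a * (r s a + γ * ∑ s1 : S, p a s s1 * W s1)
      = (∑ a : A, π s a * r s a) + γ * ∑ s1 : S, (∑ a : A, π s a * p a s s1) * W s1 := by
  rw [← swap2 s γ W, ← Finset.sum_add_distrib]
  exact Finset.sum_congr rfl fun a _ => by ring

end RegretAux

theorem exact_regret_identity {S A : Type} [Fintype S] [Fintype A] [DecidableEq S] [DecidableEq A]
    [Nonempty S] [Nonempty A]
    (p : A → S → S → ℝ) (r : S → A → ℝ) (γ : ℝ) (ν : S → ℝ) (Rmax : ℝ)
    (hp : IsKernel p) (hr : ∀ s a, |r s a| ≤ Rmax)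
    (hγ0 : 0 ≤ γ) (hγ1 : γ < 1) (hν : IsPMF ν)
    (πopt : S → A → ℝ) (hoptpol : IsPolicy πopt)
    (hopt : ∀ π : S → A → ℝ, IsPolicy π → ∀ s : S, Vfun p r γ π s ≤ Vfun p r γ πopt s)
    (hsupp : ∀ (a : A) (s : S),
      Qfun p r γ πopt a s <
        Finset.univ.sup' Finset.univ_nonempty (fun a' : A => Qfun p r γ πopt a' s) →
      πopt s a = 0) :
    ∀ π : S → A → ℝ, IsPolicy π →
      IntV p r γ ν πopt - IntV p r γ ν π =
        1 / (1 - γ) * ∑ s : S, dnu p γ ν π s *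
          ∑ a : A, |π s a - πopt s a| * |Adv p r γ πopt a s| := by
  intro π hππ
  have hγne : (1 : ℝ) - γ ≠ 0 := by linarith
  -- the advantage of the optimal policy is nonpositive, and vanishes on the support of πopt
  set M : S → ℝ := fun s =>
    Finset.univ.sup' Finset.univ_nonempty (fun a' : A => Qfun p r γ πopt a' s) with hM
  have hQleM : ∀ (a : A) (s : S), Qfun p r γ πopt a s ≤ M s := fun a s => by
    simp only [hM]
    exact Finset.le_sup' (fun a' : A => Qfun p r γ πopt a' s) (Finset.mem_univ a)
  have hVopt : ∀ s, Vfun p r γ πopt s = M s := by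
    intro s
    have hzero : ∀ a, πopt s a * (M s - Qfun p r γ πopt a s) = 0 := by
      intro a
      rcases lt_or_ge (Qfun p r γ πopt a s) (M s) with h | h
      · rw [hsupp a s h, zero_mul]
      · rw [le_antisymm (hQleM a s) h, sub_self, mul_zero]
    have hsum0 : ∑ a : A, πopt s a * (M s - Qfun p r γ πopt a s) = 0 :=
      Finset.sum_eq_zero fun a _ => hzero a
    have hexp : ∑ a : A, πopt s a * (M s - Qfun p r γ πopt a s)
        = M s - Vfun p r γ πopt s := by
      simp only [mul_sub]
      rw [Finset.sum_sub_distrib, ← Finset.sum_mul, (hoptpol s).2, one_mul]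
      rfl
    rw [hexp] at hsum0
    linarith
  have hAdvnonpos : ∀ (a : A) (s : S), Adv p r γ πopt a s ≤ 0 := by
    intro a s
    rw [Adv, hVopt s]
    linarith [hQleM a s]
  -- the per-action sign identity
  have hterm : ∀ (a : A) (s : S), (π s a - πopt s a) * Adv p r γ πopt a s
      = -(|π s a - πopt s a| * |Adv p r γ πopt a s|) := by
    intro a s
    rcases lt_or_eq_of_le (hAdvnonpos a s) with h | h
    · have hQ : Qfun p r γ πopt a s < M s := by
        have := h
        rw [Adv, hVopt s] at this
        linarith
      rw [hsupp a s hQ, sub_zero, abs_of_nonneg ((hππ s).1 a), abs_of_neg h]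
      ring
    · rw [h, mul_zero, abs_zero, mul_zero, neg_zero]
  -- the "reward" function f and its properties
  set f : S → ℝ := fun s => ∑ a : A, π s a * Adv p r γ πopt a s with hf
  have hAdvzero : ∀ s, ∑ a : A, πopt s a * Adv p r γ πopt a s = 0 := by
    intro s
    simp only [Adv, mul_sub]
    rw [Finset.sum_sub_distrib, ← Finset.sum_mul, (hoptpol s).2, one_mul]
    rw [show ∑ a : A, πopt s a * Qfun p r γ πopt a s = Vfun p r γ πopt s from rfl, sub_self]
  have hf_neg : ∀ s, f s = -∑ a : A, |π s a - πopt s a| * |Adv p r γ πopt a s| := by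
    intro s
    have h1 : f s = ∑ a : A, (π s a - πopt s a) * Adv p r γ πopt a s := by
      rw [show (∑ a : A, (π s a - πopt s a) * Adv p r γ πopt a s)
          = (∑ a : A, π s a * Adv p r γ πopt a s)
            - ∑ a : A, πopt s a * Adv p r γ πopt a s from by
        rw [← Finset.sum_sub_distrib]
        exact Finset.sum_congr rfl fun a _ => by ring]
      rw [hAdvzero s, sub_zero]
    rw [h1, ← Finset.sum_neg_distrib]
    exact Finset.sum_congr rfl fun a _ => hterm a s
  -- bound on f
  set QB : ℝ := Rmax + (1 - γ)⁻¹ * (γ * Rmax) with hQB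
  have hAdv_bound : ∀ (a : A) (s : S), |Adv p r γ πopt a s| ≤ 2 * QB := by
    intro a s
    rw [Adv]
    calc |Qfun p r γ πopt a s - Vfun p r γ πopt s|
        ≤ |Qfun p r γ πopt a s| + |Vfun p r γ πopt s| := abs_sub _ _
      _ ≤ QB + QB := add_le_add (Q_bound hp hoptpol hr hγ0 hγ1 a s)
          (V_bound hp hoptpol hr hγ0 hγ1 s)
      _ = 2 * QB := by ring
  have hf_bound : ∀ s, |f s| ≤ 2 * QB := fun s =>
    pmf_dot_bound (hππ s) (fun a => hAdv_bound a s)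
  -- the candidate solution H
  set H : S → ℝ := fun s => f s + ∑ a : A, π s a * Tg p π γ f a s with hH
  -- the kernel K
  set K : S → S → ℝ := fun s s1 => ∑ a : A, π s a * p a s s1 with hK
  have hK0 : ∀ s s1, 0 ≤ K s s1 := fun s s1 =>
    Finset.sum_nonneg fun a _ => mul_nonneg ((hππ s).1 a) ((hp a s).1 s1)
  have hK1 : ∀ s, ∑ s1 : S, K s s1 = 1 := by
    intro s
    rw [Finset.sum_comm]
    calc ∑ a : A, ∑ s1 : S, π s a * p a s s1
        = ∑ a : A, π s a * ∑ s1 : S, p a s s1 :=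
          Finset.sum_congr rfl fun a _ => (Finset.mul_sum _ _ _).symm
      _ = ∑ a : A, π s a := Finset.sum_congr rfl fun a _ => by rw [(hp a s).2, mul_one]
      _ = 1 := (hππ s).2
  -- equation (B): H is a fixed point
  have hB : ∀ s, H s = f s + γ * ∑ s1 : S, K s s1 * H s1 := by
    intro s
    have h1 : ∀ a : A, Tg p π γ f a s = γ * ∑ s1 : S, p a s s1 * H s1 := by
      intro a
      rw [Tg_bellman hp hππ hγ0 hγ1 hf_bound a s]
    calc H s = f s + ∑ a : A, π s a * (γ * ∑ s1 : S, p a s s1 * H s1) := by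
          simp only [hH]
          exact congrArg _ (Finset.sum_congr rfl fun a _ => by rw [h1 a])
      _ = f s + γ * ∑ s1 : S, K s s1 * H s1 := by rw [swap2]
  -- equation (A): Δ is a fixed point
  set Δ : S → ℝ := fun s => Vfun p r γ π s - Vfun p r γ πopt s with hΔ
  have hA : ∀ s, Δ s = f s + γ * ∑ s1 : S, K s s1 * Δ s1 := by
    intro s
    have e1 : Vfun p r γ π s = (∑ a : A, π s a * r s a)
        + γ * ∑ s1 : S, K s s1 * Vfun p r γ π s1 := by
      rw [Vfun, Finset.sum_congr rfl fun a _ => by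
        rw [Q_bellman hp hππ hr hγ0 hγ1 a s]]
      exact mix hππ r s γ _
    have e2 : f s = ((∑ a : A, π s a * r s a)
        + γ * ∑ s1 : S, K s s1 * Vfun p r γ πopt s1) - Vfun p r γ πopt s := by
      have : f s = (∑ a : A, π s a * Qfun p r γ πopt a s)
          - Vfun p r γ πopt s := by
        simp only [hf]
        simp only [Adv, mul_sub]
        rw [Finset.sum_sub_distrib, ← Finset.sum_mul, (hππ s).2, one_mul]
      rw [this, Finset.sum_congr rfl fun a _ => by
        rw [Q_bellman hp hoptpol hr hγ0 hγ1 a s]]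
      rw [mix hππ r s γ _]
    have e3 : ∑ s1 : S, K s s1 * Δ s1
        = (∑ s1 : S, K s s1 * Vfun p r γ π s1)
          - ∑ s1 : S, K s s1 * Vfun p r γ πopt s1 := by
      rw [← Finset.sum_sub_distrib]
      exact Finset.sum_congr rfl fun s1 _ => by simp only [hΔ]; ring
    simp only [hΔ]
    rw [e1, e2, e3]
    ring
  -- Δ = H by contraction
  have hΔH : ∀ s, Δ s = H s := by
    have hz := contraction_zero hγ0 hγ1 K hK0 hK1 (fun s => Δ s - H s) (by
      intro s
      show Δ s - H s = γ * ∑ s' : S, K s s' * (Δ s' - H s')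
      rw [hA s, hB s]
      rw [show ∑ s1 : S, K s s1 * (Δ s1 - H s1)
          = (∑ s1 : S, K s s1 * Δ s1) - ∑ s1 : S, K s s1 * H s1 from by
        rw [← Finset.sum_sub_distrib]
        exact Finset.sum_congr rfl fun s1 _ => by ring]
      ring)
    intro s
    have h2 : Δ s - H s = 0 := hz s
    linarith
  -- the dnu link
  have h1 : ∀ (a : A) (s : S), ∑ s' : S, dvisit p γ π s' a s * f s'
      = (1 - γ) * (f s + Tg p π γ f a s) := by
    intro a s
    have hsum1 : ∀ s' : S, Summable (fun t : ℕ => γ ^ t * visit p π t a s s' * f s') := by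
      intro s'
      refine (summable_geom_bound hγ0 hγ1
        (c := fun t => visit p π t a s s' * f s') (C := 2 * QB) fun t => ?_).congr
        fun t => by ring
      rw [abs_mul, abs_of_nonneg (visit_nonneg hp hππ t a s s')]
      calc visit p π t a s s' * |f s'| ≤ 1 * (2 * QB) :=
            mul_le_mul (visit_le_one hp hππ t a s s') (hf_bound s') (abs_nonneg _) zero_le_one
        _ = 2 * QB := one_mul _
    have hsum2 : Summable (fun t : ℕ => γ ^ t * ∑ s' : S, visit p π t a s s' * f s') :=
      summable_geom_bound hγ0 hγ1 fun t => visit_dot_bound hp hππ hf_bound t a s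
    calc ∑ s' : S, dvisit p γ π s' a s * f s'
        = (1 - γ) * ∑ s' : S, ∑' t : ℕ, γ ^ t * visit p π t a s s' * f s' := by
          rw [Finset.mul_sum]
          refine Finset.sum_congr rfl fun s' _ => ?_
          rw [dvisit, mul_assoc, ← tsum_mul_right]
      _ = (1 - γ) * ∑' t : ℕ, ∑ s' : S, γ ^ t * visit p π t a s s' * f s' := by
          rw [Summable.tsum_finsetSum fun s' _ => hsum1 s']
      _ = (1 - γ) * ∑' t : ℕ, γ ^ t * ∑ s' : S, visit p π t a s s' * f s' := by
          congr 1
          exact tsum_congr fun t => by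
            rw [Finset.mul_sum]
            exact Finset.sum_congr rfl fun s' _ => by ring
      _ = (1 - γ) * (f s + Tg p π γ f a s) := by
          rw [Summable.tsum_eq_zero_add hsum2]
          have h0 : γ ^ 0 * ∑ s' : S, visit p π 0 a s s' * f s' = f s := by
            simp [visit_zero, ite_mul, one_mul, zero_mul]
          rw [h0]
          rfl
  have hlink : ∑ s' : S, dnu p γ ν π s' * f s' = (1 - γ) * ∑ s : S, ν s * H s := by
    calc ∑ s' : S, dnu p γ ν π s' * f s'
        = ∑ s : S, ∑ a : A, π s a * ν s * ((1 - γ) * (f s + Tg p π γ f a s)) := by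
          simp only [dnu, Finset.sum_mul]
          rw [Finset.sum_comm]
          refine Finset.sum_congr rfl fun s _ => ?_
          rw [Finset.sum_comm]
          refine Finset.sum_congr rfl fun a _ => ?_
          rw [← h1 a s, Finset.mul_sum]
          exact Finset.sum_congr rfl fun s' _ => by ring
      _ = (1 - γ) * ∑ s : S, ν s * H s := by
          rw [Finset.mul_sum]
          refine Finset.sum_congr rfl fun s _ => ?_
          calc ∑ a : A, π s a * ν s * ((1 - γ) * (f s + Tg p π γ f a s))
              = ∑ a : A, (ν s * ((1 - γ) * f s) * π s a
                  + ν s * (1 - γ) * (π s a * Tg p π γ f a s)) :=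
                Finset.sum_congr rfl fun a _ => by ring
            _ = ν s * ((1 - γ) * f s) * (∑ a : A, π s a)
                + ν s * (1 - γ) * ∑ a : A, π s a * Tg p π γ f a s := by
                rw [Finset.sum_add_distrib, ← Finset.mul_sum, ← Finset.mul_sum]
            _ = (1 - γ) * (ν s * H s) := by
                rw [(hππ s).2, mul_one]; simp only [hH]
                ring
  -- conclusion
  have hIntV : IntV p r γ ν π - IntV p r γ ν πopt = ∑ s : S, ν s * Δ s := by
    rw [IntV, IntV, ← Finset.sum_sub_distrib]
    exact Finset.sum_congr rfl fun s _ => by simp only [hΔ]; ring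
  have hfinal : ∑ s : S, dnu p γ ν π s * f s
      = (1 - γ) * (IntV p r γ ν π - IntV p r γ ν πopt) := by
    rw [hlink, hIntV]
    congr 1
    exact Finset.sum_congr rfl fun s _ => by rw [hΔH s]
  have hneg : ∑ s : S, dnu p γ ν π s * f s
      = -∑ s : S, dnu p γ ν π s * ∑ a : A, |π s a - πopt s a| * |Adv p r γ πopt a s| := by
    rw [← Finset.sum_neg_distrib]
    exact Finset.sum_congr rfl fun s _ => by rw [hf_neg s]; ring
  rw [hneg] at hfinal
  field_simp
  linarith

end VEPO
end
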